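/- arXiv:math/0308266 — 2 statements merged into one kernel-verified Lean document; each statement's English description precedes it below -/
import Mathlib

section
/- Let Z be a set of n+1 distinct real numbers, A(Z) the algebra of real-valued functions on Z, and F_i ⊆ A(Z) the subspace of restrictions of polynomials of degree ≤ i. Then F_n = A(Z), F_i ⊊ F_{i+1} for 0 ≤ i < n, and the associated graded algebra ⊕_i F_i/F_{i−1} is isomorphic as a graded ℝ-algebra to ℝ[x]/(x^{n+1}), with x of degree 1. -/
/-- The filtration of the algebra `A(Z) = (Fin (n+1) → ℝ)` of functions on `n+1` points
`z 0, …, z n` of ℝ by degree of one-variable polynomial representatives. -/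
noncomputable def ptsFiltration (n : ℕ) (z : Fin (n+1) → ℝ) (i : ℕ) :
    Submodule ℝ (Fin (n+1) → ℝ) where
  carrier := {f | ∃ p : Polynomial ℝ, p.natDegree ≤ i ∧ ∀ k, f k = p.eval (z k)}
  add_mem' := by
    rintro f g ⟨p, hp, hfp⟩ ⟨q, hq, hgq⟩
    exact ⟨p + q, le_trans (Polynomial.natDegree_add_le p q) (max_le hp hq),
      fun k => by simp [hfp k, hgq k]⟩
  zero_mem' := ⟨0, by simp, by simp⟩
  smul_mem' := by
    rintro r f ⟨p, hp, hfp⟩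
    exact ⟨r • p, le_trans (Polynomial.natDegree_smul_le r p) hp,
      fun k => by simp [hfp k]⟩

/-- For `n+1` distinct reals, the filtration `F_i` of `A(Z)` by polynomial degree satisfies
`F_n = A(Z)`, `F_i ⊊ F_{i+1}` for `i < n`, and the associated graded algebra is
`ℝ[x]/(x^{n+1})` with `x` of degree 1: there is an `f ∈ F₁` (the image of `x`) whose powers
`f^j`, `j ≤ i`, span each `F_i`. -/
theorem stmt8 (n : ℕ) (z : Fin (n+1) → ℝ) (hz : Function.Injective z) :
    ptsFiltration n z n = ⊤ ∧
    (∀ i < n, ptsFiltration n z i < ptsFiltration n z (i+1)) ∧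
    ∃ f : Fin (n+1) → ℝ, f ∈ ptsFiltration n z 1 ∧
      ∀ i : ℕ, ptsFiltration n z i =
        Submodule.span ℝ {g : Fin (n+1) → ℝ | ∃ j ≤ i, g = f ^ j} := by
  refine ⟨?_, ?_, ?_⟩
  · -- F_n = ⊤ by Lagrange interpolation
    rw [eq_top_iff]
    rintro g -
    refine ⟨Lagrange.interpolate Finset.univ z g, ?_, ?_⟩
    · by_cases h0 : Lagrange.interpolate Finset.univ z g = 0
      · simp [h0]
      · have h := Lagrange.degree_interpolate_lt (s := Finset.univ) (r := g) (v := z) hz.injOn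
        rw [Finset.card_univ, Fintype.card_fin] at h
        exact Nat.lt_succ_iff.mp
          ((Polynomial.natDegree_lt_iff_degree_lt h0).mpr (by exact_mod_cast h))
    · intro k
      exact (Lagrange.eval_interpolate_at_node g hz.injOn (Finset.mem_univ k)).symm
  · -- strict inclusions
    intro i hi
    constructor
    · rintro g ⟨p, hp, hgp⟩
      exact ⟨p, hp.trans (Nat.le_succ i), hgp⟩
    · intro hle
      have hmem : z ^ (i+1) ∈ ptsFiltration n z i := by
        apply hle
        exact ⟨Polynomial.X ^ (i+1), by simp, fun k => by simp⟩
      obtain ⟨p, hp, hzp⟩ := hmem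
      have hq : (Polynomial.X ^ (i+1) - p : Polynomial ℝ) = 0 := by
        apply Polynomial.eq_zero_of_natDegree_lt_card_of_eval_eq_zero _ hz
        · intro k
          simp [(hzp k).symm]
        · rw [Fintype.card_fin]
          refine lt_of_le_of_lt (Polynomial.natDegree_sub_le _ _) ?_
          simp only [Polynomial.natDegree_X_pow]
          exact max_lt (Nat.succ_lt_succ hi) (lt_of_le_of_lt hp (Nat.lt_succ_of_lt hi))
      have : p = Polynomial.X ^ (i+1) := by linear_combination -hq
      rw [this] at hp
      simp at hp
  · -- powers of z span
    refine ⟨z, ⟨Polynomial.X, by simp, fun k => by simp⟩, fun i => ?_⟩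
    apply le_antisymm
    · rintro g ⟨p, hp, hgp⟩
      have hg : g = ∑ j ∈ Finset.range (i+1), p.coeff j • z ^ j := by
        funext k
        rw [hgp k, Polynomial.eval_eq_sum_range' (Nat.lt_succ_of_le hp)]
        simp [smul_eq_mul]
      rw [hg]
      refine Submodule.sum_mem _ fun j hj => Submodule.smul_mem _ _
        (Submodule.subset_span ⟨j, Nat.lt_succ_iff.mp (Finset.mem_range.mp hj), rfl⟩)
    · rw [Submodule.span_le]
      rintro g ⟨j, hj, rfl⟩
      exact ⟨Polynomial.X ^ j, by simpa using hj, fun k => by simp⟩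
end

section
/- Let p₁, p₂, p₃, p₄ be four distinct points in ℝ² such that no three are collinear. Let A be the ℝ-algebra of functions on {p₁,…,p₄}, and F_i the subspace of restrictions of polynomials in two variables of degree ≤ i. Then dim F_0 = 1, dim F_1 = 3, dim F_2 = 4, so the graded pieces have dimensions 1, 2, 1 in degrees 0, 1, 2. -/
open Module MvPolynomial

section aux

/-- determinant criterion: zero det implies collinear -/
lemma collinear_of_det (a b c : Fin 2 → ℝ)
    (h : (b 0 - a 0) * (c 1 - a 1) - (b 1 - a 1) * (c 0 - a 0) = 0) (hab : a ≠ b) :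
    Collinear ℝ ({a, b, c} : Set (Fin 2 → ℝ)) := by
  rw [collinear_iff_of_mem (Set.mem_insert a _)]
  refine ⟨b - a, ?_⟩
  have hab' : b 0 ≠ a 0 ∨ b 1 ≠ a 1 := by
    by_contra hcon
    push_neg at hcon
    apply hab
    funext j
    fin_cases j
    · exact hcon.1.symm
    · exact hcon.2.symm
  intro q hq
  simp only [Set.mem_insert_iff, Set.mem_singleton_iff] at hq
  rcases hq with rfl | rfl | hq
  · exact ⟨0, by simp⟩
  · refine ⟨1, ?_⟩
    funext j
    simp
  · obtain ⟨t, ht0, ht1⟩ : ∃ t : ℝ, q 0 = t * (b 0 - a 0) + a 0 ∧ q 1 = t * (b 1 - a 1) + a 1 := by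
      subst hq
      rcases hab' with h0 | h0
      · have hne : b 0 - a 0 ≠ 0 := sub_ne_zero_of_ne h0
        refine ⟨(q 0 - a 0) / (b 0 - a 0), by field_simp; ring, ?_⟩
        field_simp
        linear_combination h
      · have hne : b 1 - a 1 ≠ 0 := sub_ne_zero_of_ne h0
        refine ⟨(q 1 - a 1) / (b 1 - a 1), ?_, by field_simp; ring⟩
        field_simp
        linear_combination -h
    refine ⟨t, ?_⟩
    funext j
    have hj : (t • (b - a) +ᵥ a) j = t * (b j - a j) + a j := by
      simp [vadd_eq_add, smul_eq_mul]
    rw [hj]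
    fin_cases j
    · exact ht0
    · exact ht1

lemma det_ne_zero (a b c : Fin 2 → ℝ) (hcol : ¬ Collinear ℝ ({a, b, c} : Set (Fin 2 → ℝ))) :
    (b 0 - a 0) * (c 1 - a 1) - (b 1 - a 1) * (c 0 - a 0) ≠ 0 := by
  intro h
  by_cases hab : a = b
  · apply hcol
    subst hab
    have : ({a, a, c} : Set (Fin 2 → ℝ)) = {a, c} := by
      simp [Set.insert_comm]
    rw [this]
    exact collinear_pair ℝ a c
  · exact hcol (collinear_of_det a b c h hab)

/-- the affine polynomial a + b X₀ + c X₁ -/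
noncomputable def lin (a b c : ℝ) : MvPolynomial (Fin 2) ℝ :=
  C a + C b * X 0 + C c * X 1

lemma lin_totalDegree (a b c : ℝ) : (lin a b c).totalDegree ≤ 1 := by
  unfold lin
  refine le_trans (totalDegree_add _ _) (max_le (le_trans (totalDegree_add _ _) (max_le ?_ ?_)) ?_)
  · simp [totalDegree_C]
  · exact le_trans (totalDegree_mul _ _) (by simp [totalDegree_C, totalDegree_X])
  · exact le_trans (totalDegree_mul _ _) (by simp [totalDegree_C, totalDegree_X])

lemma lin_eval (a b c : ℝ) (v : Fin 2 → ℝ) :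
    eval v (lin a b c) = a + b * v 0 + c * v 1 := by
  simp [lin]

/-- the line through two points, as a degree ≤ 1 polynomial -/
noncomputable def linePoly (a b : Fin 2 → ℝ) : MvPolynomial (Fin 2) ℝ :=
  lin (a 1 * b 0 - a 0 * b 1) (b 1 - a 1) (a 0 - b 0)

lemma linePoly_eval (a b v : Fin 2 → ℝ) :
    eval v (linePoly a b) =
      -((b 0 - a 0) * (v 1 - a 1) - (b 1 - a 1) * (v 0 - a 0)) := by
  rw [linePoly, lin_eval]; ring

lemma linePoly_eval_left (a b : Fin 2 → ℝ) : eval a (linePoly a b) = 0 := by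
  rw [linePoly_eval]; ring

lemma linePoly_eval_right (a b : Fin 2 → ℝ) : eval b (linePoly a b) = 0 := by
  rw [linePoly_eval]; ring

lemma linePoly_totalDegree (a b : Fin 2 → ℝ) : (linePoly a b).totalDegree ≤ 1 :=
  lin_totalDegree _ _ _

/-- evaluation of a polynomial of total degree ≤ 1 -/
lemma eval_of_deg_le_one (q : MvPolynomial (Fin 2) ℝ) (h : q.totalDegree ≤ 1)
    (v : Fin 2 → ℝ) :
    eval v q = coeff 0 q + coeff (Finsupp.single 0 1) q * v 0
      + coeff (Finsupp.single 1 1) q * v 1 := by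
  classical
  have hsub : q.support ⊆ ({0, Finsupp.single 0 1, Finsupp.single 1 1} : Finset (Fin 2 →₀ ℕ)) := by
    intro d hd
    have hle : (d.sum fun _ e => e) ≤ q.totalDegree := le_totalDegree hd
    have hsum : (d.sum fun _ e => e) = d 0 + d 1 := by
      rw [Finsupp.sum_fintype _ _ (fun _ => rfl), Fin.sum_univ_two]
    rw [hsum] at hle
    have hle' : d 0 + d 1 ≤ 1 := le_trans hle h
    simp only [Finset.mem_insert, Finset.mem_singleton]
    have hd0 : d 0 = 0 ∧ d 1 = 0 ∨ d 0 = 1 ∧ d 1 = 0 ∨ d 0 = 0 ∧ d 1 = 1 := by omega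
    rcases hd0 with ⟨h1, h2⟩ | ⟨h1, h2⟩ | ⟨h1, h2⟩
    · left; ext j; fin_cases j <;> simpa
    · right; left; ext j; fin_cases j <;> simp [h1, h2, Finsupp.single_apply]
    · right; right; ext j; fin_cases j <;> simp [h1, h2, Finsupp.single_apply]
  have h01 : (0 : Fin 2 →₀ ℕ) ≠ Finsupp.single 0 1 := by
    intro hcon
    have := DFunLike.congr_fun hcon 0
    simp at this
  have h02 : (0 : Fin 2 →₀ ℕ) ≠ Finsupp.single 1 1 := by
    intro hcon
    have := DFunLike.congr_fun hcon 1
    simp at this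
  have h12 : (Finsupp.single (0 : Fin 2) 1) ≠ Finsupp.single 1 1 := by
    intro hcon
    have := DFunLike.congr_fun hcon 0
    simp at this
  rw [eval_eq']
  rw [Finset.sum_subset hsub (fun d _ hd => by
    rw [MvPolynomial.notMem_support_iff.mp hd, zero_mul])]
  rw [Finset.sum_insert (by simp [h01, h02]), Finset.sum_insert (by simp [h12]),
    Finset.sum_singleton]
  have e0 : ∀ w : Fin 2 → ℝ, (∏ i, w i ^ (0 : Fin 2 →₀ ℕ) i) = 1 := by intro w; simp
  have e1 : ∀ w : Fin 2 → ℝ, (∏ i, w i ^ (Finsupp.single (0:Fin 2) 1) i) = w 0 := by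
    intro w; rw [Fin.prod_univ_two]; simp [Finsupp.single_apply]
  have e2 : ∀ w : Fin 2 → ℝ, (∏ i, w i ^ (Finsupp.single (1:Fin 2) 1) i) = w 1 := by
    intro w; rw [Fin.prod_univ_two]; simp [Finsupp.single_apply]
  rw [e0, e1, e2]
  ring

lemma eval_of_deg_le_zero (q : MvPolynomial (Fin 2) ℝ) (h : q.totalDegree ≤ 0)
    (v : Fin 2 → ℝ) : eval v q = coeff 0 q := by
  have h1 : q.totalDegree ≤ 1 := le_trans h (by norm_num)
  rw [eval_of_deg_le_one q h1 v]
  have hc : ∀ d : Fin 2 →₀ ℕ, d ≠ 0 → coeff d q = 0 := by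
    intro d hd
    by_contra hcon
    have hmem : d ∈ q.support := MvPolynomial.mem_support_iff.mpr hcon
    have := (totalDegree_eq_zero_iff _ q).mp (Nat.le_zero.mp h) d hmem
    exact hd (Finsupp.ext this)
  have h0ne : (Finsupp.single (0 : Fin 2) 1 : Fin 2 →₀ ℕ) ≠ 0 := by
    intro hcon
    have := DFunLike.congr_fun hcon 0
    simp at this
  have h1ne : (Finsupp.single (1 : Fin 2) 1 : Fin 2 →₀ ℕ) ≠ 0 := by
    intro hcon
    have := DFunLike.congr_fun hcon 1
    simp at this
  rw [hc _ h0ne, hc _ h1ne]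
  ring

end aux

section main

open Module

/-- The filtration of the algebra of functions on four points `p 0, …, p 3` of ℝ² by total
degree of two-variable polynomial representatives. -/
noncomputable def planeFiltration (p : Fin 4 → Fin 2 → ℝ) (i : ℕ) :
    Submodule ℝ (Fin 4 → ℝ) where
  carrier := {f | ∃ q : MvPolynomial (Fin 2) ℝ, q.totalDegree ≤ i ∧
    ∀ k, f k = MvPolynomial.eval (p k) q}
  add_mem' := by
    rintro f g ⟨q₁, hq₁, hf⟩ ⟨q₂, hq₂, hg⟩
    exact ⟨q₁ + q₂, le_trans (MvPolynomial.totalDegree_add q₁ q₂) (max_le hq₁ hq₂),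
      fun k => by simp [hf k, hg k]⟩
  zero_mem' := ⟨0, by simp, by simp⟩
  smul_mem' := by
    rintro r f ⟨q, hq, hf⟩
    refine ⟨r • q, le_trans (MvPolynomial.totalDegree_smul_le r q) hq,
      fun k => by simp [hf k]⟩

/-- For four distinct points in ℝ², no three collinear, the filtration of the algebra of
functions on them by polynomial degree satisfies `dim F₀ = 1`, `dim F₁ = 3`, `dim F₂ = 4`,
so the graded pieces have dimensions `1, 2, 1` in degrees `0, 1, 2`. -/
theorem stmt11 (p : Fin 4 → Fin 2 → ℝ) (hinj : Function.Injective p)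
    (hcol : ∀ i j k : Fin 4, i ≠ j → i ≠ k → j ≠ k →
      ¬ Collinear ℝ ({p i, p j, p k} : Set (Fin 2 → ℝ))) :
    finrank ℝ (planeFiltration p 0) = 1 ∧
    finrank ℝ (planeFiltration p 1) = 3 ∧
    finrank ℝ (planeFiltration p 2) = 4 := by
  classical
  set w1 : Fin 4 → ℝ := fun _ => 1 with hw1
  set w2 : Fin 4 → ℝ := fun k => p k 0 with hw2
  set w3 : Fin 4 → ℝ := fun k => p k 1 with hw3
  have hw1mem : ∀ i, w1 ∈ planeFiltration p i := by
    intro i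
    exact ⟨C 1, by simp [totalDegree_C], fun k => by simp [hw1]⟩
  -- F0
  have h0 : planeFiltration p 0 = Submodule.span ℝ {w1} := by
    apply le_antisymm
    · rintro f ⟨q, hq, hf⟩
      have : f = (coeff 0 q) • w1 := by
        funext k
        rw [Pi.smul_apply, hf k, eval_of_deg_le_zero q hq]
        simp [hw1]
      rw [this]
      exact Submodule.smul_mem _ _ (Submodule.subset_span rfl)
    · rw [Submodule.span_le, Set.singleton_subset_iff]
      exact hw1mem 0
  have hr0 : finrank ℝ (planeFiltration p 0) = 1 := by
    rw [h0]
    exact finrank_span_singleton (by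
      intro hcon
      have := congr_fun hcon 0
      simp [hw1] at this)
  -- F1
  have h1 : planeFiltration p 1 = Submodule.span ℝ (Set.range ![w1, w2, w3]) := by
    apply le_antisymm
    · rintro f ⟨q, hq, hf⟩
      have : f = (coeff 0 q) • w1 + (coeff (Finsupp.single 0 1) q) • w2
          + (coeff (Finsupp.single 1 1) q) • w3 := by
        funext k
        rw [Pi.add_apply, Pi.add_apply, Pi.smul_apply, Pi.smul_apply, Pi.smul_apply]
        rw [hf k, eval_of_deg_le_one q hq]
        simp [hw1, hw2, hw3]
      rw [this]
      refine Submodule.add_mem _ (Submodule.add_mem _ ?_ ?_) ?_ <;>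
        refine Submodule.smul_mem _ _ (Submodule.subset_span ?_)
      · exact ⟨0, rfl⟩
      · exact ⟨1, rfl⟩
      · exact ⟨2, rfl⟩
    · rw [Submodule.span_le]
      rintro f ⟨i, rfl⟩
      fin_cases i
      · exact hw1mem 1
      · exact ⟨X 0, by simp [totalDegree_X], fun k => by simp [hw2]⟩
      · exact ⟨X 1, by simp [totalDegree_X], fun k => by simp [hw3]⟩
  have hli : LinearIndependent ℝ ![w1, w2, w3] := by
    rw [Fintype.linearIndependent_iff]
    intro g hg
    rw [Fin.sum_univ_three] at hg
    simp only [Matrix.cons_val_zero, Matrix.cons_val_one, Matrix.head_cons, Matrix.cons_val_two, Matrix.tail_cons] at hg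
    have e : ∀ k : Fin 4, g 0 + g 1 * p k 0 + g 2 * p k 1 = 0 := by
      intro k
      have h' := congr_fun hg k
      simp only [Pi.add_apply, Pi.smul_apply, Pi.zero_apply, smul_eq_mul, hw1, hw2, hw3,
        Matrix.cons_val_zero, Matrix.cons_val_one, Matrix.head_cons, Matrix.cons_val_two,
        Matrix.tail_cons] at h'
      linarith [h']
    have e0 := e 0
    have e1 := e 1
    have e2 := e 2
    have hD := det_ne_zero (p 0) (p 1) (p 2)
      (hcol 0 1 2 (by decide) (by decide) (by decide))
    have hg1 : g 1 * ((p 1 0 - p 0 0) * (p 2 1 - p 0 1) - (p 1 1 - p 0 1) * (p 2 0 - p 0 0))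
        = 0 := by
      linear_combination (p 2 1 - p 0 1) * e1 - (p 2 1 - p 0 1) * e0
        - (p 1 1 - p 0 1) * e2 + (p 1 1 - p 0 1) * e0
    have hg2 : g 2 * ((p 1 0 - p 0 0) * (p 2 1 - p 0 1) - (p 1 1 - p 0 1) * (p 2 0 - p 0 0))
        = 0 := by
      linear_combination (p 1 0 - p 0 0) * e2 - (p 1 0 - p 0 0) * e0
        - (p 2 0 - p 0 0) * e1 + (p 2 0 - p 0 0) * e0
    have hg1' : g 1 = 0 := by
      rcases mul_eq_zero.mp hg1 with h | h
      · exact h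
      · exact absurd h hD
    have hg2' : g 2 = 0 := by
      rcases mul_eq_zero.mp hg2 with h | h
      · exact h
      · exact absurd h hD
    have hg0' : g 0 = 0 := by
      rw [hg1', hg2'] at e0
      linarith
    intro i
    fin_cases i <;> assumption
  have hr1 : finrank ℝ (planeFiltration p 1) = 3 := by
    rw [h1, finrank_span_eq_card hli]
    simp
  -- F2
  have hsingle : ∀ k a b c : Fin 4, k ≠ a → k ≠ b → k ≠ c → a ≠ b → a ≠ c → b ≠ c →
      (∀ j : Fin 4, j = k ∨ j = a ∨ j = b ∨ j = c) →
      Pi.single k (1 : ℝ) ∈ planeFiltration p 2 := by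
    intro k a b c hka hkb hkc hab hac hbc hall
    set L1 := linePoly (p a) (p b) with hL1
    set L2 := linePoly (p c) (p a) with hL2
    have hs1 : eval (p k) L1 ≠ 0 := by
      rw [hL1, linePoly_eval]
      exact neg_ne_zero.mpr (det_ne_zero (p a) (p b) (p k)
        (hcol a b k hab (Ne.symm hka) (Ne.symm hkb)))
    have hs2 : eval (p k) L2 ≠ 0 := by
      rw [hL2, linePoly_eval]
      exact neg_ne_zero.mpr (det_ne_zero (p c) (p a) (p k)
        (hcol c a k (Ne.symm hac) (Ne.symm hkc) (Ne.symm hka)))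
    have hsne : eval (p k) L1 * eval (p k) L2 ≠ 0 := mul_ne_zero hs1 hs2
    refine ⟨C (eval (p k) L1 * eval (p k) L2)⁻¹ * (L1 * L2), ?_, ?_⟩
    · refine le_trans (totalDegree_mul _ _) ?_
      have : (C (eval (p k) L1 * eval (p k) L2)⁻¹ : MvPolynomial (Fin 2) ℝ).totalDegree = 0 :=
        totalDegree_C _
      rw [this, zero_add]
      refine le_trans (totalDegree_mul _ _) ?_
      have d1 : L1.totalDegree ≤ 1 := hL1 ▸ linePoly_totalDegree (p a) (p b)
      have d2 : L2.totalDegree ≤ 1 := hL2 ▸ linePoly_totalDegree (p c) (p a)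
      omega
    · intro j
      rcases hall j with rfl | rfl | rfl | rfl
      · rw [Pi.single_eq_same]
        rw [map_mul, map_mul, eval_C]
        exact (inv_mul_cancel₀ hsne).symm
      · rw [Pi.single_eq_of_ne (Ne.symm hka)]
        rw [map_mul, map_mul, hL1, linePoly_eval_left]
        ring
      · rw [Pi.single_eq_of_ne (Ne.symm hkb)]
        rw [map_mul, map_mul, hL1, linePoly_eval_right]
        ring
      · rw [Pi.single_eq_of_ne (Ne.symm hkc)]
        rw [map_mul, map_mul, hL2, linePoly_eval_left]
        ring
  have h2 : planeFiltration p 2 = ⊤ := by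
    rw [Submodule.eq_top_iff']
    intro f
    have hf : f = ∑ k : Fin 4, f k • (Pi.single k 1 : Fin 4 → ℝ) := by
      funext j
      rw [Finset.sum_apply]
      simp [Pi.single_apply]
    rw [hf]
    refine Submodule.sum_mem _ fun k _ => Submodule.smul_mem _ _ ?_
    have hcover : ∀ j : Fin 4, j = k ∨ j = k + 1 ∨ j = k + 2 ∨ j = k + 3 := by
      revert k; decide
    have hdist : k ≠ k + 1 ∧ k ≠ k + 2 ∧ k ≠ k + 3 ∧ k + 1 ≠ k + 2 ∧ k + 1 ≠ k + 3
        ∧ k + 2 ≠ k + 3 := by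
      revert k; decide
    exact hsingle k (k + 1) (k + 2) (k + 3) hdist.1 hdist.2.1 hdist.2.2.1
      hdist.2.2.2.1 hdist.2.2.2.2.1 hdist.2.2.2.2.2 hcover
  have hr2 : finrank ℝ (planeFiltration p 2) = 4 := by
    rw [h2, finrank_top]
    simp
  exact ⟨hr0, hr1, hr2⟩

end main
end
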